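/- arXiv:2007.03438 — 7 statements merged into one kernel-verified Lean document; each statement's English description precedes it below -/
import Mathlib

section
/- Let X be a nonempty finite set, P : X × X → ℝ a row-stochastic matrix, γ ∈ [0,1), R : X → ℝ, μ : X → ℝ with μ ≥ 0 and ∑_x μ(x) = 1, and dD : X → ℝ with dD(x) > 0 for all x. Let dπ be the unique solution of d = (1−γ) μ + γ Pᵀ d, set ζ*(x) := dπ(x)/dD(x), and let ρ := ∑_x dπ(x) R(x). Then for every Q : X → ℝ, the Lagrangian estimator built from the exact dual solution is exact: ∑_x dD(x) ζ*(x) R(x) + ∑_x Q(x) ((1−γ) μ(x) + γ (Pᵀ(dD·ζ*))(x) − dD(x) ζ*(x)) = ρ, where (dD·ζ*)(x) := dD(x)ζ*(x). -/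
open Finset

theorem sum_mul_flow_residual_eq_zero {X : Type*} [Fintype X] (P : X → X → ℝ) (γ : ℝ)
    (μ d Q : X → ℝ) (hd : ∀ x, d x = (1 - γ) * μ x + γ * ∑ y, P y x * d y) :
    ∑ x, Q x * ((1 - γ) * μ x + γ * ∑ y, P y x * d y - d x) = 0 :=
  sum_eq_zero fun x _ => by rw [← hd x, sub_self, mul_zero]

theorem stmt_6_general {X : Type*} [Fintype X]
    (P : X → X → ℝ) (γ : ℝ) (R : X → ℝ) (μ : X → ℝ)
    (dD : X → ℝ) (hdD : ∀ x, 0 < dD x)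
    (dπ : X → ℝ) (hdπ : ∀ x, dπ x = (1 - γ) * μ x + γ * ∑ y, P y x * dπ y)
    (ζs : X → ℝ) (hζs : ∀ x, ζs x = dπ x / dD x)
    (ρ : ℝ) (hρ : ρ = ∑ x, dπ x * R x) :
    ∀ Q : X → ℝ,
      (∑ x, dD x * ζs x * R x) +
        ∑ x, Q x * ((1 - γ) * μ x + γ * (∑ y, P y x * (dD y * ζs y)) - dD x * ζs x) = ρ := by
  intro Q
  have hdDζs : ∀ x, dD x * ζs x = dπ x := fun x => by
    rw [hζs, mul_div_cancel₀ _ (hdD x).ne']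
  simp only [hdDζs, sum_mul_flow_residual_eq_zero P γ μ dπ Q hdπ, add_zero, hρ]

/-- The other half of the doubly robust property: the Lagrangian estimator built
from the exact dual solution `ζ* = dπ / dD` equals the policy value `ρ`, for every primal
variable `Q`. -/
theorem stmt_6 {X : Type*} [Fintype X] [Nonempty X]
    (P : X → X → ℝ) (hPnonneg : ∀ x y, 0 ≤ P x y) (hProw : ∀ x, ∑ y, P x y = 1)
    (γ : ℝ) (hγ0 : 0 ≤ γ) (hγ1 : γ < 1)
    (R : X → ℝ) (μ : X → ℝ) (hμnonneg : ∀ x, 0 ≤ μ x) (hμsum : ∑ x, μ x = 1)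
    (dD : X → ℝ) (hdD : ∀ x, 0 < dD x)
    (dπ : X → ℝ) (hdπ : ∀ x, dπ x = (1 - γ) * μ x + γ * ∑ y, P y x * dπ y)
    (ζs : X → ℝ) (hζs : ∀ x, ζs x = dπ x / dD x)
    (ρ : ℝ) (hρ : ρ = ∑ x, dπ x * R x) :
    ∀ Q : X → ℝ,
      (∑ x, dD x * ζs x * R x) +
        ∑ x, Q x * ((1 - γ) * μ x + γ * (∑ y, P y x * (dD y * ζs y)) - dD x * ζs x) = ρ :=
  stmt_6_general P γ R μ dD hdD dπ hdπ ζs hζs ρ hρ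
end

section
/- Let X be a nonempty finite set, P : X × X → ℝ a row-stochastic matrix, γ ∈ [0,1), R : X → ℝ, μ : X → ℝ with μ ≥ 0 and ∑_x μ(x) = 1, dD : X → ℝ with dD(x) > 0 for all x, α_ζ > 0, α_R ∈ ℝ, and f₂ : ℝ → ℝ convex and differentiable. Define the dual-regularized Lagrangian L(ζ, Q) := (1−γ) ∑_x μ(x) Q(x) + ∑_x dD(x) ζ(x) (α_R R(x) + γ (P Q)(x) − Q(x)) − α_ζ ∑_x dD(x) f₂(ζ(x)) for ζ, Q : X → ℝ. Let Qπ solve Q = R + γPQ, dπ solve d = (1−γ)μ + γPᵀd, and set ζ*(x) := dπ(x)/dD(x) and Q* := α_R Qπ − α_ζ (I − γP)^{-1} (f₂' ∘ ζ*). Then (ζ*, Q*) is a saddle point of L: for all ζ : X → ℝ, L(ζ, Q*) ≤ L(ζ*, Q*), and for all Q : X → ℝ, L(ζ*, Q*) ≤ L(ζ*, Q). In particular the maximizing dual solution is ζ* = dπ/dD, so the dual estimator ∑_x dD(x) ζ*(x) R(x) equals the policy value ρ := ∑_x dπ(x) R(x), for every α_R and regardless of whether the positivity constraint ζ ≥ 0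 is imposed (since ζ* ≥ 0). -/
/-!
Since `dπ` satisfies the flow equation `dπ = (1-γ)μ + γPᵀdπ`, the `Q`-dependent part of
`L(dπ/dD, Q)` vanishes: `L(ζ*, ·)` is constant, which is the minimization half of the saddle
point. For fixed `Q*`, the Bellman residual `α_R R + γPQ* - Q*` equals `α_ζ f₂'(ζ*)`, so
`L(·, Q*)` is, up to a constant, `α_ζ ∑ dD (ζ f₂'(ζ*) - f₂(ζ))`, which is maximized at `ζ*` by the
tangent-line inequality for the convex `f₂`. Nonnegativity of `dπ` (hence of `ζ*`) follows by
summing the flow equation for the negative part of `dπ`: its total mass is at most `γ` times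
itself.
-/

/-- The dual-regularized Lagrangian
`L(ζ, Q) = (1-γ)⟨μ, Q⟩ + ∑ dD·ζ·(α_R R + γ P Q - Q) - α_ζ ∑ dD·f₂(ζ)`. -/
def dualRegLagrangian {X : Type*} [Fintype X] (P : X → X → ℝ) (γ : ℝ)
    (R μ dD : X → ℝ) (αζ αR : ℝ) (f₂ : ℝ → ℝ) (ζ Q : X → ℝ) : ℝ :=
  (1 - γ) * (∑ x, μ x * Q x) +
    (∑ x, dD x * ζ x * (αR * R x + γ * (∑ y, P x y * Q y) - Q x)) -
    αζ * ∑ x, dD x * f₂ (ζ x)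

open Finset

theorem ConvexOn.deriv_mul_sub_le {S : Set ℝ} {f : ℝ → ℝ} {x y : ℝ} (hf : ConvexOn ℝ S f)
    (hx : x ∈ S) (hy : y ∈ S) (hfd : DifferentiableAt ℝ f x) :
    deriv f x * (y - x) ≤ f y - f x := by
  rcases lt_trichotomy x y with hxy | rfl | hyx
  · have h := hf.deriv_le_slope hx hy hxy hfd
    rwa [slope_def_field, le_div_iff₀ (sub_pos.2 hxy)] at h
  · simp
  · have h := hf.slope_le_deriv hy hx hyx hfd
    rw [slope_def_field, div_le_iff₀ (sub_pos.2 hyx)] at h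
    linarith

section DiscountedFlow

variable {X : Type*} [Fintype X] {P : X → X → ℝ} {γ : ℝ} {R μ dD d : X → ℝ} {αζ αR : ℝ}
  {f₂ : ℝ → ℝ}

theorem sum_sum_transpose_mul_of_row_sum_one (hProw : ∀ x, ∑ y, P x y = 1) (v : X → ℝ) :
    ∑ x, ∑ y, P y x * v y = ∑ y, v y := by
  rw [sum_comm]
  exact sum_congr rfl fun y _ => by rw [← sum_mul, hProw y, one_mul]

theorem discountedOccupancy_nonneg (hPnonneg : ∀ x y, 0 ≤ P x y) (hProw : ∀ x, ∑ y, P x y = 1)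
    (hγ0 : 0 ≤ γ) (hγ1 : γ < 1) (hμ : ∀ x, 0 ≤ μ x)
    (hd : ∀ x, d x = (1 - γ) * μ x + γ * ∑ y, P y x * d y) (x : X) : 0 ≤ d x := by
  have hneg_le : ∀ x, (d x)⁻ ≤ γ * ∑ y, P y x * (d y)⁻ := by
    intro x
    have hsum : -∑ y, P y x * d y ≤ ∑ y, P y x * (d y)⁻ := by
      rw [← sum_neg_distrib]
      exact sum_le_sum fun y _ => by
        rw [← mul_neg]; exact mul_le_mul_of_nonneg_left (neg_le_negPart _) (hPnonneg y x)
    have hrhs : 0 ≤ γ * ∑ y, P y x * (d y)⁻ :=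
      mul_nonneg hγ0 (sum_nonneg fun y _ => mul_nonneg (hPnonneg y x) (negPart_nonneg _))
    have hinit : 0 ≤ (1 - γ) * μ x := mul_nonneg (sub_nonneg.2 hγ1.le) (hμ x)
    rw [negPart_def]
    refine sup_le ?_ hrhs
    rw [hd x]
    nlinarith [mul_le_mul_of_nonneg_left hsum hγ0]
  have hmass : ∑ x, (d x)⁻ ≤ γ * ∑ x, (d x)⁻ := by
    calc ∑ x, (d x)⁻ ≤ ∑ x, γ * ∑ y, P y x * (d y)⁻ := sum_le_sum fun x _ => hneg_le x
      _ = γ * ∑ x, (d x)⁻ := by rw [← mul_sum, sum_sum_transpose_mul_of_row_sum_one hProw]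
  have hmass_zero : ∑ x, (d x)⁻ = 0 := by
    have := sum_nonneg fun x (_ : x ∈ univ) => negPart_nonneg (d x)
    nlinarith
  exact negPart_eq_zero.1 <|
    (sum_eq_zero_iff_of_nonneg fun x _ => negPart_nonneg (d x)).1 hmass_zero x (mem_univ x)

theorem sum_mul_discounted_transition_of_flow
    (hd : ∀ x, d x = (1 - γ) * μ x + γ * ∑ y, P y x * d y) (Q : X → ℝ) :
    ∑ x, d x * (γ * ∑ y, P x y * Q y) = ∑ x, d x * Q x - (1 - γ) * ∑ x, μ x * Q x := by
  calc ∑ x, d x * (γ * ∑ y, P x y * Q y) = ∑ y, (γ * ∑ x, P x y * d x) * Q y := by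
        simp only [mul_sum, sum_mul]
        rw [sum_comm]
        exact sum_congr rfl fun y _ => sum_congr rfl fun x _ => by ring
    _ = ∑ y, (d y - (1 - γ) * μ y) * Q y :=
        sum_congr rfl fun y _ => by rw [eq_sub_of_add_eq' (hd y).symm]
    _ = ∑ x, d x * Q x - (1 - γ) * ∑ x, μ x * Q x := by
        simp only [sub_mul, sum_sub_distrib, mul_sum, mul_assoc]

theorem dualRegLagrangian_eq_of_flow
    (hd : ∀ x, d x = (1 - γ) * μ x + γ * ∑ y, P y x * d y) {ζ : X → ℝ}
    (hζ : ∀ x, dD x * ζ x = d x) (Q : X → ℝ) :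
    dualRegLagrangian P γ R μ dD αζ αR f₂ ζ Q =
      αR * ∑ x, d x * R x - αζ * ∑ x, dD x * f₂ (ζ x) := by
  have hsplit : ∑ x, d x * (αR * R x + γ * ∑ y, P x y * Q y - Q x) =
      αR * ∑ x, d x * R x + ∑ x, d x * (γ * ∑ y, P x y * Q y) - ∑ x, d x * Q x := by
    rw [mul_sum, ← sum_add_distrib, ← sum_sub_distrib]
    exact sum_congr rfl fun x _ => by ring
  simp only [dualRegLagrangian, hζ]
  rw [hsplit, sum_mul_discounted_transition_of_flow hd Q]
  ring

theorem dualRegLagrangian_le_of_bellman (hf : ConvexOn ℝ Set.univ f₂)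
    (hfd : Differentiable ℝ f₂) (hαζ : 0 ≤ αζ) (hdD : ∀ x, 0 ≤ dD x) {ζ' Q : X → ℝ}
    (hQ : ∀ x, Q x = αR * R x - αζ * deriv f₂ (ζ' x) + γ * ∑ y, P x y * Q y) (ζ : X → ℝ) :
    dualRegLagrangian P γ R μ dD αζ αR f₂ ζ Q ≤ dualRegLagrangian P γ R μ dD αζ αR f₂ ζ' Q := by
  have hres : ∀ x, αR * R x + γ * ∑ y, P x y * Q y - Q x = αζ * deriv f₂ (ζ' x) :=
    fun x => by linarith [hQ x]
  have hterm : ∀ x, dD x * ζ x * (αζ * deriv f₂ (ζ' x)) - αζ * (dD x * f₂ (ζ x)) ≤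
      dD x * ζ' x * (αζ * deriv f₂ (ζ' x)) - αζ * (dD x * f₂ (ζ' x)) := by
    intro x
    have htan := hf.deriv_mul_sub_le (Set.mem_univ _) (Set.mem_univ (ζ x)) (hfd (ζ' x))
    linarith [mul_le_mul_of_nonneg_left htan (mul_nonneg hαζ (hdD x))]
  simp only [dualRegLagrangian, hres]
  rw [add_sub_assoc, add_sub_assoc, mul_sum _ (fun x => dD x * f₂ (ζ x)),
    mul_sum _ (fun x => dD x * f₂ (ζ' x)), ← sum_sub_distrib, ← sum_sub_distrib]
  exact add_le_add_right (sum_le_sum fun x _ => hterm x) _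

end DiscountedFlow

theorem stmt_7_general {X : Type*} [Fintype X]
    (P : X → X → ℝ) (hPnonneg : ∀ x y, 0 ≤ P x y) (hProw : ∀ x, ∑ y, P x y = 1)
    (γ : ℝ) (hγ0 : 0 ≤ γ) (hγ1 : γ < 1)
    (R : X → ℝ) (μ : X → ℝ) (hμnonneg : ∀ x, 0 ≤ μ x)
    (dD : X → ℝ) (hdD : ∀ x, 0 < dD x)
    (αζ : ℝ) (hαζ : 0 < αζ) (αR : ℝ)
    (f₂ : ℝ → ℝ) (hf₂conv : ConvexOn ℝ Set.univ f₂) (hf₂diff : Differentiable ℝ f₂)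
    (dπ : X → ℝ) (hdπ : ∀ x, dπ x = (1 - γ) * μ x + γ * ∑ y, P y x * dπ y)
    (ζs : X → ℝ) (hζs : ∀ x, ζs x = dπ x / dD x)
    -- `Qs = α_R Qπ - α_ζ (I - γP)⁻¹ (f₂' ∘ ζs)`, characterized by `(I - γP) Qs = α_R R - α_ζ f₂'∘ζs`:
    (Qs : X → ℝ)
    (hQs : ∀ x, Qs x = αR * R x - αζ * deriv f₂ (ζs x) + γ * ∑ y, P x y * Qs y) :
    (∀ ζ : X → ℝ, dualRegLagrangian P γ R μ dD αζ αR f₂ ζ Qs ≤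
        dualRegLagrangian P γ R μ dD αζ αR f₂ ζs Qs) ∧
    (∀ Q : X → ℝ, dualRegLagrangian P γ R μ dD αζ αR f₂ ζs Qs ≤
        dualRegLagrangian P γ R μ dD αζ αR f₂ ζs Q) ∧
    (∀ x, 0 ≤ ζs x) ∧
    (∑ x, dD x * ζs x * R x = ∑ x, dπ x * R x) := by
  have hdπ_nonneg := discountedOccupancy_nonneg hPnonneg hProw hγ0 hγ1 hμnonneg hdπ
  have hdD_ζs : ∀ x, dD x * ζs x = dπ x := fun x => by
    rw [hζs x, mul_div_cancel₀ _ (hdD x).ne']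
  refine ⟨dualRegLagrangian_le_of_bellman hf₂conv hf₂diff hαζ.le (fun x => (hdD x).le) hQs,
    fun Q => ?_, fun x => ?_, sum_congr rfl fun x _ => by rw [hdD_ζs x]⟩
  · rw [dualRegLagrangian_eq_of_flow hdπ hdD_ζs, dualRegLagrangian_eq_of_flow hdπ hdD_ζs]
  · rw [hζs x]
    exact div_nonneg (hdπ_nonneg x) (hdD x).le

/-- In the configuration `α_Q = 0, α_ζ > 0` (cases v–viii of Theorem 2), the pair
`(ζ*, Q*)` with `ζ* = dπ/dD` and `Q* = α_R Qπ - α_ζ (I - γP)⁻¹(f₂' ∘ ζ*)` is a saddle point of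
the dual-regularized Lagrangian; in particular `ζ* ≥ 0` and the dual estimator
`∑ dD·ζ*·R` equals the policy value `∑ dπ·R`. -/
theorem stmt_7 {X : Type*} [Fintype X] [Nonempty X]
    (P : X → X → ℝ) (hPnonneg : ∀ x y, 0 ≤ P x y) (hProw : ∀ x, ∑ y, P x y = 1)
    (γ : ℝ) (hγ0 : 0 ≤ γ) (hγ1 : γ < 1)
    (R : X → ℝ) (μ : X → ℝ) (hμnonneg : ∀ x, 0 ≤ μ x) (hμsum : ∑ x, μ x = 1)
    (dD : X → ℝ) (hdD : ∀ x, 0 < dD x)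
    (αζ : ℝ) (hαζ : 0 < αζ) (αR : ℝ)
    (f₂ : ℝ → ℝ) (hf₂conv : ConvexOn ℝ Set.univ f₂) (hf₂diff : Differentiable ℝ f₂)
    (Qπ : X → ℝ) (hQπ : ∀ x, Qπ x = R x + γ * ∑ y, P x y * Qπ y)
    (dπ : X → ℝ) (hdπ : ∀ x, dπ x = (1 - γ) * μ x + γ * ∑ y, P y x * dπ y)
    (ζs : X → ℝ) (hζs : ∀ x, ζs x = dπ x / dD x)
    -- `Qs = α_R Qπ - α_ζ (I - γP)⁻¹ (f₂' ∘ ζs)`, characterized by `(I - γP) Qs = α_R R - α_ζ f₂'∘ζs`: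
    (Qs : X → ℝ)
    (hQs : ∀ x, Qs x = αR * R x - αζ * deriv f₂ (ζs x) + γ * ∑ y, P x y * Qs y) :
    (∀ ζ : X → ℝ, dualRegLagrangian P γ R μ dD αζ αR f₂ ζ Qs ≤
        dualRegLagrangian P γ R μ dD αζ αR f₂ ζs Qs) ∧
    (∀ Q : X → ℝ, dualRegLagrangian P γ R μ dD αζ αR f₂ ζs Qs ≤
        dualRegLagrangian P γ R μ dD αζ αR f₂ ζs Q) ∧
    (∀ x, 0 ≤ ζs x) ∧
    (∑ x, dD x * ζs x * R x = ∑ x, dπ x * R x) :=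
  stmt_7_general P hPnonneg hProw γ hγ0 hγ1 R μ hμnonneg dD hdD αζ hαζ αR f₂ hf₂conv hf₂diff dπ hdπ
    ζs hζs Qs hQs
end

section
/- Let X be a nonempty finite set, P : X × X → ℝ a row-stochastic matrix, γ ∈ [0,1), R : X → ℝ, μ : X → ℝ with μ ≥ 0 and ∑_x μ(x) = 1, dD : X → ℝ with dD(x) > 0 for all x, α_Q > 0, and f₁ : ℝ → ℝ convex and differentiable. Define the primal-regularized Lagrangian with reward L(ζ, Q) := (1−γ) ∑_x μ(x) Q(x) + α_Q ∑_x dD(x) f₁(Q(x)) + ∑_x dD(x) ζ(x) (R(x) + γ (P Q)(x) − Q(x)). Let Qπ solve Q = R + γPQ, dπ solve d = (1−γ)μ + γPᵀd, and set Q* := Qπ and ζ*(x) := dπ(x)/dD(x) + α_Q ((I − γPᵀ)^{-1}(dD · (f₁' ∘ Qπ)))(x) / dD(x), where (dD·(f₁'∘Qπ))(x) := dD(x) f₁'(Qπ(x)). Then (ζ*, Q*) is a saddle point: for all ζ : X → ℝ, L(ζ, Q*) = L(ζ*, Q*), and for all Q : X → ℝ, L(ζ*, Q*) ≤ L(ζ*,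 Q). In particular the primal estimator is unbiased: (1−γ) ∑_x μ(x) Q*(x) = ∑_x dπ(x) R(x). -/
/-! Since `Qπ` solves the Bellman equation, the residual `R + γ P Qπ - Qπ` vanishes and
`L(·, Qπ)` is constant. For the other half, put `w := dD · ζ*`, which solves
`w = (1 - γ) μ + α_Q dD · f₁'(Qπ) + γ Pᵀ w`. Moving `γ P` across the pairing turns
`⟨w, R + γ P Q - Q⟩` into `⟨w, R⟩ - ⟨(1 - γ) μ + α_Q dD · f₁'(Qπ), Q⟩`, so
`L(ζ*, Q) = ⟨w, R⟩ + α_Q ∑ dD (f₁(Q) - f₁'(Qπ) Q)`, which by convexity of `f₁` is minimised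
at `Q = Qπ`. Pairing the fixed-point equations of `Qπ` and `dπ` in the same way gives
unbiasedness. -/

/-- The primal-regularized Lagrangian with reward
`L(ζ, Q) = (1-γ)⟨μ, Q⟩ + α_Q ∑ dD·f₁(Q) + ∑ dD·ζ·(R + γ P Q - Q)`. -/
def primalRegLagrangian {X : Type*} [Fintype X] (P : X → X → ℝ) (γ : ℝ)
    (R μ dD : X → ℝ) (αQ : ℝ) (f₁ : ℝ → ℝ) (ζ Q : X → ℝ) : ℝ :=
  (1 - γ) * (∑ x, μ x * Q x) + αQ * (∑ x, dD x * f₁ (Q x)) +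
    ∑ x, dD x * ζ x * (R x + γ * (∑ y, P x y * Q y) - Q x)

open Finset

lemma ConvexOn.add_deriv_mul_sub_le {S : Set ℝ} {f : ℝ → ℝ} {a b : ℝ} (hf : ConvexOn ℝ S f)
    (ha : a ∈ S) (hb : b ∈ S) (hfa : DifferentiableAt ℝ f a) :
    f a + deriv f a * (b - a) ≤ f b := by
  rcases lt_trichotomy a b with hab | rfl | hba
  · have h := hf.deriv_le_slope ha hb hab hfa
    rw [slope_def_field, le_div_iff₀ (sub_pos.2 hab)] at h
    linarith
  · simp
  · have h := hf.slope_le_deriv hb ha hba hfa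
    rw [slope_def_field, div_le_iff₀ (sub_pos.2 hba)] at h
    linarith

section Lagrangian

variable {X : Type*} [Fintype X] (P : X → X → ℝ) (γ : ℝ)

lemma sum_mul_sum_mul_comm (w Q : X → ℝ) :
    ∑ x, w x * ∑ y, P x y * Q y = ∑ y, (∑ x, P x y * w x) * Q y := by
  simp only [mul_sum, sum_mul]
  rw [sum_comm]
  exact sum_congr rfl fun _ _ => sum_congr rfl fun _ _ => by ring

lemma sum_mul_bellmanResidual {R Q c w : X → ℝ}
    (hw : ∀ x, w x = c x + γ * ∑ y, P y x * w y) :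
    ∑ x, w x * (R x + γ * ∑ y, P x y * Q y - Q x) = ∑ x, w x * R x - ∑ x, c x * Q x := by
  have hwQ : ∑ x, w x * Q x = ∑ x, c x * Q x + γ * ∑ y, (∑ x, P x y * w x) * Q y := by
    rw [mul_sum, ← sum_add_distrib]
    exact sum_congr rfl fun x _ => by rw [hw x]; ring
  have hres : ∑ x, w x * (R x + γ * ∑ y, P x y * Q y - Q x) =
      ∑ x, w x * R x + γ * ∑ x, w x * ∑ y, P x y * Q y - ∑ x, w x * Q x := by
    rw [mul_sum, ← sum_add_distrib, ← sum_sub_distrib]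
    exact sum_congr rfl fun x _ => by ring
  rw [hres, hwQ, sum_mul_sum_mul_comm]
  ring

lemma primalRegLagrangian_eq_of_bellman {R μ dD Q : X → ℝ} (αQ : ℝ) (f₁ : ℝ → ℝ)
    (hQ : ∀ x, Q x = R x + γ * ∑ y, P x y * Q y) (ζ ζ' : X → ℝ) :
    primalRegLagrangian P γ R μ dD αQ f₁ ζ Q = primalRegLagrangian P γ R μ dD αQ f₁ ζ' Q := by
  have hres : ∀ x, R x + γ * ∑ y, P x y * Q y - Q x = 0 := fun x => by linarith [hQ x]
  simp only [primalRegLagrangian, hres, mul_zero]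

lemma primalRegLagrangian_eq_of_weight {R μ dD ζ w g : X → ℝ} {αQ : ℝ} (f₁ : ℝ → ℝ)
    (hζ : ∀ x, dD x * ζ x = w x)
    (hw : ∀ x, w x = ((1 - γ) * μ x + αQ * (dD x * g x)) + γ * ∑ y, P y x * w y)
    (Q : X → ℝ) :
    primalRegLagrangian P γ R μ dD αQ f₁ ζ Q =
      ∑ x, w x * R x + αQ * ∑ x, dD x * (f₁ (Q x) - g x * Q x) := by
  unfold primalRegLagrangian
  simp only [hζ]
  rw [sum_mul_bellmanResidual P γ hw]
  simp only [add_mul, mul_sub, mul_assoc, sum_add_distrib, sum_sub_distrib, mul_sum]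
  ring

end Lagrangian

theorem stmt_9_general {X : Type*} [Fintype X]
    (P : X → X → ℝ)
    (γ : ℝ)
    (R : X → ℝ) (μ : X → ℝ)
    (dD : X → ℝ) (hdD : ∀ x, 0 < dD x)
    (αQ : ℝ) (hαQ : 0 < αQ)
    (f₁ : ℝ → ℝ) (hf₁conv : ConvexOn ℝ Set.univ f₁) (hf₁diff : Differentiable ℝ f₁)
    (Qπ : X → ℝ) (hQπ : ∀ x, Qπ x = R x + γ * ∑ y, P x y * Qπ y)
    (dπ : X → ℝ) (hdπ : ∀ x, dπ x = (1 - γ) * μ x + γ * ∑ y, P y x * dπ y)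
    -- `u = (I - γPᵀ)⁻¹ (dD · (f₁' ∘ Qπ))`, characterized by `(I - γPᵀ) u = dD · (f₁' ∘ Qπ)`:
    (u : X → ℝ) (hu : ∀ x, u x = dD x * deriv f₁ (Qπ x) + γ * ∑ y, P y x * u y)
    (Qs : X → ℝ) (hQs : Qs = Qπ)
    (ζs : X → ℝ) (hζs : ∀ x, ζs x = dπ x / dD x + αQ * u x / dD x) :
    (∀ ζ : X → ℝ, primalRegLagrangian P γ R μ dD αQ f₁ ζ Qs =
        primalRegLagrangian P γ R μ dD αQ f₁ ζs Qs) ∧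
    (∀ Q : X → ℝ, primalRegLagrangian P γ R μ dD αQ f₁ ζs Qs ≤
        primalRegLagrangian P γ R μ dD αQ f₁ ζs Q) ∧
    ((1 - γ) * ∑ x, μ x * Qs x = ∑ x, dπ x * R x) := by
  subst hQs
  have hζ : ∀ x, dD x * ζs x = dπ x + αQ * u x := fun x => by
    rw [hζs x]; field_simp [(hdD x).ne']
  have hw : ∀ x, dπ x + αQ * u x =
      ((1 - γ) * μ x + αQ * (dD x * deriv f₁ (Qs x))) + γ * ∑ y, P y x * (dπ y + αQ * u y) := by
    intro x
    simp only [mul_add, sum_add_distrib, mul_left_comm _ αQ, ← mul_sum]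
    linear_combination hdπ x + αQ * hu x
  refine ⟨(primalRegLagrangian_eq_of_bellman P γ αQ f₁ hQπ · ζs), fun Q => ?_, ?_⟩
  · simp only [primalRegLagrangian_eq_of_weight P γ f₁ hζ hw]
    gcongr _ + _ * ∑ x, _ * ?_ with x
    · exact (hdD x).le
    · have htangent := hf₁conv.add_deriv_mul_sub_le (Set.mem_univ (Qs x)) (Set.mem_univ (Q x)) (hf₁diff _)
      linarith
  · have hres : ∀ x, R x + γ * ∑ y, P x y * Qs y - Qs x = 0 := fun x => by linarith [hQπ x]
    have hpair := sum_mul_bellmanResidual P γ (R := R) (Q := Qs) hdπ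
    simp only [hres, mul_zero, sum_const_zero, mul_assoc, ← mul_sum] at hpair
    linarith

/-- Configuration `α_Q > 0, α_ζ = 0, α_R = 1`, `ζ` unconstrained (case i of
Theorem 2): with `Q* = Qπ` and `ζ* = dπ/dD + α_Q (I - γPᵀ)⁻¹(dD·(f₁'∘Qπ))/dD`, the pair
`(ζ*, Q*)` is a saddle point of the primal-regularized Lagrangian, and the primal estimator
is unbiased: `(1-γ)⟨μ, Q*⟩ = ⟨dπ, R⟩`. -/
theorem stmt_9 {X : Type*} [Fintype X] [Nonempty X]
    (P : X → X → ℝ) (hPnonneg : ∀ x y, 0 ≤ P x y) (hProw : ∀ x, ∑ y, P x y = 1)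
    (γ : ℝ) (hγ0 : 0 ≤ γ) (hγ1 : γ < 1)
    (R : X → ℝ) (μ : X → ℝ) (hμnonneg : ∀ x, 0 ≤ μ x) (hμsum : ∑ x, μ x = 1)
    (dD : X → ℝ) (hdD : ∀ x, 0 < dD x)
    (αQ : ℝ) (hαQ : 0 < αQ)
    (f₁ : ℝ → ℝ) (hf₁conv : ConvexOn ℝ Set.univ f₁) (hf₁diff : Differentiable ℝ f₁)
    (Qπ : X → ℝ) (hQπ : ∀ x, Qπ x = R x + γ * ∑ y, P x y * Qπ y)
    (dπ : X → ℝ) (hdπ : ∀ x, dπ x = (1 - γ) * μ x + γ * ∑ y, P y x * dπ y)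
    -- `u = (I - γPᵀ)⁻¹ (dD · (f₁' ∘ Qπ))`, characterized by `(I - γPᵀ) u = dD · (f₁' ∘ Qπ)`:
    (u : X → ℝ) (hu : ∀ x, u x = dD x * deriv f₁ (Qπ x) + γ * ∑ y, P y x * u y)
    (Qs : X → ℝ) (hQs : Qs = Qπ)
    (ζs : X → ℝ) (hζs : ∀ x, ζs x = dπ x / dD x + αQ * u x / dD x) :
    (∀ ζ : X → ℝ, primalRegLagrangian P γ R μ dD αQ f₁ ζ Qs =
        primalRegLagrangian P γ R μ dD αQ f₁ ζs Qs) ∧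
    (∀ Q : X → ℝ, primalRegLagrangian P γ R μ dD αQ f₁ ζs Qs ≤
        primalRegLagrangian P γ R μ dD αQ f₁ ζs Q) ∧
    ((1 - γ) * ∑ x, μ x * Qs x = ∑ x, dπ x * R x) :=
  stmt_9_general P γ R μ dD hdD αQ hαQ f₁ hf₁conv hf₁diff Qπ hQπ dπ hdπ u hu Qs hQs ζs hζs
end

section
/- Let X be a nonempty finite set, P : X × X → ℝ a row-stochastic matrix, γ ∈ [0,1), R : X → ℝ, μ : X → ℝ with μ ≥ 0 and ∑_x μ(x) = 1, dD : X → ℝ with dD(x) > 0 for all x, α_Q > 0, and f₁ : ℝ → ℝ convex and differentiable. With Qπ the unique solution of Q = R + γPQ, dπ the unique solution of d = (1−γ)μ + γPᵀd, and ζ*(x) := dπ(x)/dD(x) + α_Q ((I − γPᵀ)^{-1}(dD · (f₁' ∘ Qπ)))(x) / dD(x) (the optimal dual solution under primal regularization with reward), the dual estimator is biased by exactly α_Q ∑_x dD(x) f₁'(Qπ(x)) Qπ(x): that is, ∑_x dD(x) ζ*(x) R(x) = ∑_x dπ(x) R(x) + α_Q ∑_x dD(x) f₁'(Qπ(x)) Qπ(x).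 -/
open Finset Matrix

/-- Both sides equal `⟪u, (I - γP) Q⟫ = ⟪(I - γPᵀ) u, Q⟫`. -/
theorem sum_mul_eq_sum_mul_of_bellman_of_adjoint_bellman {X 𝕜 : Type*} [Fintype X] [CommRing 𝕜]
    (P : X → X → 𝕜) (γ : 𝕜) {Q R u b : X → 𝕜}
    (hQ : ∀ x, Q x = R x + γ * ∑ y, P x y * Q y)
    (hu : ∀ x, u x = b x + γ * ∑ y, P y x * u y) :
    ∑ x, u x * R x = ∑ x, b x * Q x := by
  have hR : R = Q - γ • (Matrix.of P *ᵥ Q) := by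
    ext x
    simp only [Pi.sub_apply, Pi.smul_apply, smul_eq_mul, mulVec, dotProduct, of_apply]
    exact eq_sub_of_add_eq (hQ x).symm
  have hb : b = u - γ • (u ᵥ* Matrix.of P) := by
    ext x
    simp only [Pi.sub_apply, Pi.smul_apply, smul_eq_mul, vecMul, dotProduct, of_apply]
    rw [hu x]
    simp only [mul_comm (P _ x)]
    ring
  change u ⬝ᵥ R = b ⬝ᵥ Q
  rw [hR, hb, dotProduct_sub, sub_dotProduct, dotProduct_smul, smul_dotProduct,
    dotProduct_mulVec]

theorem stmt_10_general {X : Type*} [Fintype X]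
    (P : X → X → ℝ)
    (γ : ℝ)
    (R : X → ℝ)
    (dD : X → ℝ) (hdD : ∀ x, 0 < dD x)
    (αQ : ℝ)
    (f₁ : ℝ → ℝ)
    (Qπ : X → ℝ) (hQπ : ∀ x, Qπ x = R x + γ * ∑ y, P x y * Qπ y)
    (dπ : X → ℝ)
    -- `u = (I - γPᵀ)⁻¹ (dD · (f₁' ∘ Qπ))`, characterized by `(I - γPᵀ) u = dD · (f₁' ∘ Qπ)`:
    (u : X → ℝ) (hu : ∀ x, u x = dD x * deriv f₁ (Qπ x) + γ * ∑ y, P y x * u y)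
    (ζs : X → ℝ) (hζs : ∀ x, ζs x = dπ x / dD x + αQ * u x / dD x) :
    ∑ x, dD x * ζs x * R x =
      (∑ x, dπ x * R x) + αQ * ∑ x, dD x * deriv f₁ (Qπ x) * Qπ x := by
  calc ∑ x, dD x * ζs x * R x = ∑ x, (dπ x * R x + αQ * (u x * R x)) := by
        refine sum_congr rfl fun x _ => ?_
        rw [hζs x]
        field_simp [(hdD x).ne']
    _ = (∑ x, dπ x * R x) + αQ * ∑ x, u x * R x := by rw [sum_add_distrib, mul_sum]
    _ = (∑ x, dπ x * R x) + αQ * ∑ x, dD x * deriv f₁ (Qπ x) * Qπ x := by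
        rw [sum_mul_eq_sum_mul_of_bellman_of_adjoint_bellman P γ hQπ hu]

/-- In configuration `α_Q > 0, α_ζ = 0, α_R = 1` (case i of Theorem 2), the
optimal dual solution `ζ* = dπ/dD + α_Q (I - γPᵀ)⁻¹(dD·(f₁'∘Qπ))/dD` yields a dual estimator
biased by exactly `α_Q ∑ dD·f₁'(Qπ)·Qπ`. -/
theorem stmt_10 {X : Type*} [Fintype X] [Nonempty X]
    (P : X → X → ℝ) (hPnonneg : ∀ x y, 0 ≤ P x y) (hProw : ∀ x, ∑ y, P x y = 1)
    (γ : ℝ) (hγ0 : 0 ≤ γ) (hγ1 : γ < 1)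
    (R : X → ℝ) (μ : X → ℝ) (hμnonneg : ∀ x, 0 ≤ μ x) (hμsum : ∑ x, μ x = 1)
    (dD : X → ℝ) (hdD : ∀ x, 0 < dD x)
    (αQ : ℝ) (hαQ : 0 < αQ)
    (f₁ : ℝ → ℝ) (hf₁conv : ConvexOn ℝ Set.univ f₁) (hf₁diff : Differentiable ℝ f₁)
    (Qπ : X → ℝ) (hQπ : ∀ x, Qπ x = R x + γ * ∑ y, P x y * Qπ y)
    (dπ : X → ℝ) (hdπ : ∀ x, dπ x = (1 - γ) * μ x + γ * ∑ y, P y x * dπ y)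
    -- `u = (I - γPᵀ)⁻¹ (dD · (f₁' ∘ Qπ))`, characterized by `(I - γPᵀ) u = dD · (f₁' ∘ Qπ)`:
    (u : X → ℝ) (hu : ∀ x, u x = dD x * deriv f₁ (Qπ x) + γ * ∑ y, P y x * u y)
    (ζs : X → ℝ) (hζs : ∀ x, ζs x = dπ x / dD x + αQ * u x / dD x) :
    ∑ x, dD x * ζs x * R x =
      (∑ x, dπ x * R x) + αQ * ∑ x, dD x * deriv f₁ (Qπ x) * Qπ x :=
  stmt_10_general P γ R dD hdD αQ f₁ Qπ hQπ dπ u hu ζs hζs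
end

section
/- Let X be a nonempty finite set, P : X × X → ℝ a row-stochastic matrix, γ ∈ [0,1), μ : X → ℝ with μ ≥ 0 and ∑_x μ(x) = 1, dD : X → ℝ with dD(x) > 0 for all x and ∑_x dD(x) = 1, α_Q > 0, and f₁ : ℝ → ℝ convex and differentiable with f₁'(c) = 0 for some c ∈ ℝ. Define the primal-regularized, reward-free Lagrangian with normalization L(ζ, Q, λ) := (1−γ) ∑_x μ(x) Q(x) + α_Q ∑_x dD(x) f₁(Q(x)) + λ + ∑_x dD(x) ζ(x) (γ (P Q)(x) − Q(x) − λ). Let dπ solve d = (1−γ)μ + γPᵀd and set ζ*(x) := dπ(x)/dD(x), Q* := the constant function c, λ* := (γ − 1)c. Then (ζ*, Q*, λ*) is a saddle point: for all ζ : X → ℝ, L(ζ, Q*, λ*) = L(ζ*, Q*, λ*), and for all Q : X → ℝ and λ ∈ ℝ, L(ζ*, Q*, λ*) ≤ L(ζ*, Q, λ); and the saddle value is L(ζ*, Q*, λ*) = α_Q f₁(c). In particular the dual solution is ζ* = dπ/dD, so the dual estimator ∑_x dD(x) ζ*(x) R(x) = ∑_x dπ(x) R(x) is unbiased for any reward R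 : X → ℝ. -/
/-- The primal-regularized, reward-free Lagrangian with normalization variable `λ`:
`L(ζ, Q, λ) = (1-γ)⟨μ, Q⟩ + α_Q ∑ dD·f₁(Q) + λ + ∑ dD·ζ·(γ P Q - Q - λ)`. -/
def primalRegLagrangianNorm {X : Type*} [Fintype X] (P : X → X → ℝ) (γ : ℝ)
    (μ dD : X → ℝ) (αQ : ℝ) (f₁ : ℝ → ℝ) (ζ Q : X → ℝ) (lam : ℝ) : ℝ :=
  (1 - γ) * (∑ x, μ x * Q x) + αQ * (∑ x, dD x * f₁ (Q x)) + lam +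
    ∑ x, dD x * ζ x * (γ * (∑ y, P x y * Q y) - Q x - lam)

/-!
Multiplying the Bellman flow equation `dπ = (1-γ)μ + γ Pᵀ dπ` against `Q` shows that
`∑ dπ (γ P Q - Q) = -(1-γ)⟨μ, Q⟩`; with `Q ≡ 1` this gives `∑ dπ = 1`. Hence at
`ζ* = dπ / dD` every linear term of the Lagrangian cancels and `L(ζ*, Q, λ) = α_Q ∑ dD f₁(Q)`,
which is minimal at the minimiser `Q ≡ c` of `f₁`. At `Q* ≡ c`, `λ* = (γ-1)c` the constraint
residual `γ P Q* - Q* - λ*` vanishes because `P` is row-stochastic, so `L(·, Q*, λ*)` is the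
constant `α_Q f₁(c)`.
-/

open Finset Set

lemma ConvexOn.le_of_deriv_eq_zero {f : ℝ → ℝ} (hf : ConvexOn ℝ univ f) {c : ℝ}
    (hfc : DifferentiableAt ℝ f c) (hc : deriv f c = 0) (x : ℝ) : f c ≤ f x := by
  have hright : derivWithin f (Ioi c) c = 0 := by
    rw [hfc.hasDerivAt.hasDerivWithinAt.derivWithin (uniqueDiffWithinAt_Ioi c), hc]
  exact hf.isMinOn_of_rightDeriv_eq_zero (by simp) hright (mem_univ x)

lemma Finset.le_sum_mul_of_forall_le {ι : Type*} {s : Finset ι} {w g : ι → ℝ} {a : ℝ}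
    (hw : ∀ i ∈ s, 0 ≤ w i) (hw1 : ∑ i ∈ s, w i = 1) (hg : ∀ i ∈ s, a ≤ g i) :
    a ≤ ∑ i ∈ s, w i * g i :=
  calc a = ∑ i ∈ s, w i * a := by rw [← sum_mul, hw1, one_mul]
    _ ≤ ∑ i ∈ s, w i * g i := sum_le_sum fun i hi => mul_le_mul_of_nonneg_left (hg i hi) (hw i hi)

section DiscountedFlow

variable {X : Type*} [Fintype X] {P : X → X → ℝ} {γ : ℝ} {μ d : X → ℝ}

lemma sum_mul_sum_transition (Q : X → ℝ) :
    ∑ x, d x * ∑ y, P x y * Q y = ∑ y, (∑ x, P x y * d x) * Q y := by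
  simp only [mul_sum, sum_mul]
  rw [sum_comm]
  exact sum_congr rfl fun _ _ => sum_congr rfl fun _ _ => by ring

lemma sum_flow_mul_bellman_residual (hflow : ∀ x, d x = (1 - γ) * μ x + γ * ∑ y, P y x * d y)
    (Q : X → ℝ) :
    ∑ x, d x * (γ * ∑ y, P x y * Q y - Q x) = -((1 - γ) * ∑ x, μ x * Q x) := by
  have hpair : ∑ x, d x * (γ * ∑ y, P x y * Q y) = ∑ x, (d x - (1 - γ) * μ x) * Q x := by
    simp only [mul_left_comm (d _) γ, ← mul_sum, sum_mul_sum_transition]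
    rw [mul_sum]
    refine sum_congr rfl fun x _ => ?_
    rw [hflow x]
    ring
  simp only [mul_sub, sum_sub_distrib, hpair, sub_mul, mul_assoc, ← mul_sum]
  ring

lemma sum_eq_one_of_flow (hProw : ∀ x, ∑ y, P x y = 1) (hμsum : ∑ x, μ x = 1) (hγ : γ ≠ 1)
    (hflow : ∀ x, d x = (1 - γ) * μ x + γ * ∑ y, P y x * d y) :
    ∑ x, d x = 1 := by
  have h := sum_flow_mul_bellman_residual hflow fun _ => 1
  simp only [mul_one, hProw, hμsum, ← sum_mul] at h
  have : (γ - 1) * (∑ x, d x - 1) = 0 := by linarith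
  linarith [(mul_eq_zero.mp this).resolve_left (sub_ne_zero.mpr hγ)]

end DiscountedFlow

section Lagrangian

variable {X : Type*} [Fintype X] {P : X → X → ℝ} {γ : ℝ} {μ dD : X → ℝ} (αQ : ℝ) (f₁ : ℝ → ℝ)

lemma primalRegLagrangianNorm_const (hProw : ∀ x, ∑ y, P x y = 1) (hμsum : ∑ x, μ x = 1)
    (hdDsum : ∑ x, dD x = 1) (ζ : X → ℝ) (c : ℝ) :
    primalRegLagrangianNorm P γ μ dD αQ f₁ ζ (fun _ => c) ((γ - 1) * c) = αQ * f₁ c := by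
  have hresidual : ∀ x, γ * ∑ y, P x y * c - c - (γ - 1) * c = 0 := fun x => by
    rw [← sum_mul, hProw, one_mul]
    ring
  simp only [primalRegLagrangianNorm, hresidual, mul_zero, sum_const_zero]
  simp only [← sum_mul, hμsum, hdDsum]
  ring

lemma primalRegLagrangianNorm_of_mul_eq_flow {ζ d : X → ℝ} (hζ : ∀ x, dD x * ζ x = d x)
    (hflow : ∀ x, d x = (1 - γ) * μ x + γ * ∑ y, P y x * d y) (hsum : ∑ x, d x = 1)
    (Q : X → ℝ) (lam : ℝ) :
    primalRegLagrangianNorm P γ μ dD αQ f₁ ζ Q lam = αQ * ∑ x, dD x * f₁ (Q x) := by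
  have hlinear : ∑ x, dD x * ζ x * (γ * ∑ y, P x y * Q y - Q x - lam) =
      ∑ x, d x * (γ * ∑ y, P x y * Q y - Q x) - lam := by
    simp only [hζ, mul_sub _ _ lam, sum_sub_distrib, ← sum_mul, hsum, one_mul]
  rw [primalRegLagrangianNorm, hlinear, sum_flow_mul_bellman_residual hflow]
  ring

end Lagrangian

theorem stmt_12_general {X : Type*} [Fintype X]
    (P : X → X → ℝ) (hProw : ∀ x, ∑ y, P x y = 1)
    (γ : ℝ) (hγ1 : γ < 1)
    (μ : X → ℝ) (hμsum : ∑ x, μ x = 1)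
    (dD : X → ℝ) (hdD : ∀ x, 0 < dD x) (hdDsum : ∑ x, dD x = 1)
    (αQ : ℝ) (hαQ : 0 < αQ)
    (f₁ : ℝ → ℝ) (hf₁conv : ConvexOn ℝ Set.univ f₁) (hf₁diff : Differentiable ℝ f₁)
    (c : ℝ) (hc : deriv f₁ c = 0)
    (dπ : X → ℝ) (hdπ : ∀ x, dπ x = (1 - γ) * μ x + γ * ∑ y, P y x * dπ y)
    (ζs : X → ℝ) (hζs : ∀ x, ζs x = dπ x / dD x)
    (Qs : X → ℝ) (hQs : ∀ x, Qs x = c)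
    (lams : ℝ) (hlams : lams = (γ - 1) * c) :
    (∀ ζ : X → ℝ, primalRegLagrangianNorm P γ μ dD αQ f₁ ζ Qs lams =
        primalRegLagrangianNorm P γ μ dD αQ f₁ ζs Qs lams) ∧
    (∀ (Q : X → ℝ) (lam : ℝ), primalRegLagrangianNorm P γ μ dD αQ f₁ ζs Qs lams ≤
        primalRegLagrangianNorm P γ μ dD αQ f₁ ζs Q lam) ∧
    (primalRegLagrangianNorm P γ μ dD αQ f₁ ζs Qs lams = αQ * f₁ c) ∧
    (∀ R : X → ℝ, ∑ x, dD x * ζs x * R x = ∑ x, dπ x * R x) := by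
  obtain rfl : Qs = fun _ => c := funext hQs
  subst hlams
  have hζ : ∀ x, dD x * ζs x = dπ x := fun x => by
    rw [hζs, mul_div_cancel₀ _ (hdD x).ne']
  have hsum : ∑ x, dπ x = 1 := sum_eq_one_of_flow hProw hμsum hγ1.ne hdπ
  have hval := primalRegLagrangianNorm_const αQ f₁ hProw hμsum hdDsum (γ := γ)
  refine ⟨fun ζ => by rw [hval, hval], fun Q lam => ?_, hval ζs c, fun R => by simp only [hζ]⟩
  rw [hval, primalRegLagrangianNorm_of_mul_eq_flow αQ f₁ hζ hdπ hsum]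
  refine mul_le_mul_of_nonneg_left ?_ hαQ.le
  exact le_sum_mul_of_forall_le (fun x _ => (hdD x).le) hdDsum
    fun x _ => hf₁conv.le_of_deriv_eq_zero (hf₁diff c) hc (Q x)

/-- Configuration `α_Q > 0, α_ζ = 0, α_R = 0` with the normalization variable
`λ` (cases iii–iv of Theorem 2, GenDICE/GradientDICE): `(ζ*, Q*, λ*)` with `ζ* = dπ/dD`,
`Q* ≡ c` (where `f₁'(c) = 0`) and `λ* = (γ-1)c` is a saddle point, the saddle value is
`α_Q f₁(c)`, and the dual estimator is unbiased for any reward. -/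
theorem stmt_12 {X : Type*} [Fintype X] [Nonempty X]
    (P : X → X → ℝ) (hPnonneg : ∀ x y, 0 ≤ P x y) (hProw : ∀ x, ∑ y, P x y = 1)
    (γ : ℝ) (hγ0 : 0 ≤ γ) (hγ1 : γ < 1)
    (μ : X → ℝ) (hμnonneg : ∀ x, 0 ≤ μ x) (hμsum : ∑ x, μ x = 1)
    (dD : X → ℝ) (hdD : ∀ x, 0 < dD x) (hdDsum : ∑ x, dD x = 1)
    (αQ : ℝ) (hαQ : 0 < αQ)
    (f₁ : ℝ → ℝ) (hf₁conv : ConvexOn ℝ Set.univ f₁) (hf₁diff : Differentiable ℝ f₁)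
    (c : ℝ) (hc : deriv f₁ c = 0)
    (dπ : X → ℝ) (hdπ : ∀ x, dπ x = (1 - γ) * μ x + γ * ∑ y, P y x * dπ y)
    (ζs : X → ℝ) (hζs : ∀ x, ζs x = dπ x / dD x)
    (Qs : X → ℝ) (hQs : ∀ x, Qs x = c)
    (lams : ℝ) (hlams : lams = (γ - 1) * c) :
    (∀ ζ : X → ℝ, primalRegLagrangianNorm P γ μ dD αQ f₁ ζ Qs lams =
        primalRegLagrangianNorm P γ μ dD αQ f₁ ζs Qs lams) ∧
    (∀ (Q : X → ℝ) (lam : ℝ), primalRegLagrangianNorm P γ μ dD αQ f₁ ζs Qs lams ≤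
        primalRegLagrangianNorm P γ μ dD αQ f₁ ζs Q lam) ∧
    (primalRegLagrangianNorm P γ μ dD αQ f₁ ζs Qs lams = αQ * f₁ c) ∧
    (∀ R : X → ℝ, ∑ x, dD x * ζs x * R x = ∑ x, dπ x * R x) :=
  stmt_12_general P hProw γ hγ1 μ hμsum dD hdD hdDsum αQ hαQ f₁ hf₁conv hf₁diff c hc dπ hdπ ζs hζs
    Qs hQs lams hlams
end

section
/- Let X be a nonempty finite set, P : X × X → ℝ a row-stochastic matrix, γ ∈ [0,1), R : X → ℝ, μ : X → ℝ with μ ≥ 0 and ∑_x μ(x) = 1, dD : X → ℝ with dD(x) > 0 for all x, k ∈ ℕ, and φ : X → ℝ^k a feature map. Define Ξ := ∑_x dD(x) φ(x) (φ(x) − γ (Pφ)(x))ᵀ ∈ ℝ^{k×k} (with (Pφ)(x) := ∑_y P(x,y) φ(y)) and assume Ξ is invertible. Then v := (1−γ) (Ξᵀ)^{-1} ∑_x μ(x) φ(x) is the unique vector satisfying the dual first-order condition (1−γ) ∑_x μ(x) φ(x) + ∑_x dD(x) ⟨φ(x), v⟩ (γ (Pφ)(x) − φ(x)) = 0, and the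 resulting dual (ratio-based) estimate equals the LSTDQ estimate: ∑_x dD(x) R(x) ⟨φ(x), v⟩ = (1−γ) (∑_x μ(x) φ(x))ᵀ Ξ^{-1} (∑_x dD(x) R(x) φ(x)). In particular, under linear parametrization the dual estimate coincides with the primal LSTDQ estimate. -/
/-!
Writing `ψ(x) := φ(x) - γ (Pφ)(x)`, the defining sum of `Ξ` gives
`(Ξᵀ w)_i = ∑ₓ dD(x) ⟨φ(x), w⟩ ψ(x)_i`, so the dual first-order condition is the linear system
`Ξᵀ v = (1-γ) a`, uniquely solved by `v = (1-γ) (Ξᵀ)⁻¹ a`. The dual estimate is `⟨b, v⟩`, and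
`⟨b, (Ξᵀ)⁻¹ a⟩ = ⟨a, Ξ⁻¹ b⟩` turns it into the LSTDQ estimate.
-/

open Matrix

namespace Matrix

section

variable {X ι κ α : Type*} [Fintype X] [Fintype ι] [CommSemiring α]

theorem transpose_mulVec_apply_of_eq_sum {M : Matrix ι κ α} {c : X → α} {f : X → ι → α}
    {g : X → κ → α} (hM : ∀ i j, M i j = ∑ x, c x * f x i * g x j) (w : ι → α) (j : κ) :
    (Mᵀ *ᵥ w) j = ∑ x, c x * (f x ⬝ᵥ w) * g x j := by
  simp only [mulVec, dotProduct, transpose_apply, hM, Finset.sum_mul, Finset.mul_sum]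
  rw [Finset.sum_comm]
  refine Finset.sum_congr rfl fun x _ => Finset.sum_congr rfl fun i _ => ?_
  ring

theorem sum_mul_dotProduct_of_eq_sum {c : X → α} {f : X → ι → α} {b : ι → α}
    (hb : ∀ i, b i = ∑ x, c x * f x i) (w : ι → α) :
    ∑ x, c x * (f x ⬝ᵥ w) = b ⬝ᵥ w := by
  simp only [dotProduct, hb, Finset.sum_mul, Finset.mul_sum]
  rw [Finset.sum_comm]
  refine Finset.sum_congr rfl fun x _ => Finset.sum_congr rfl fun i _ => ?_
  ring

end

section

variable {n α : Type*} [Fintype n] [DecidableEq n] [CommRing α]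

theorem mulVec_eq_iff_eq_inv_mulVec {A : Matrix n n α} (hA : IsUnit A) {w c : n → α} :
    A *ᵥ w = c ↔ w = A⁻¹ *ᵥ c := by
  have hdet : IsUnit A.det := (isUnit_iff_isUnit_det A).mp hA
  constructor
  · rintro rfl
    rw [mulVec_mulVec, nonsing_inv_mul _ hdet, one_mulVec]
  · rintro rfl
    rw [mulVec_mulVec, mul_nonsing_inv _ hdet, one_mulVec]

theorem dotProduct_transpose_inv_mulVec (A : Matrix n n α) (a b : n → α) :
    b ⬝ᵥ (Aᵀ⁻¹ *ᵥ a) = a ⬝ᵥ (A⁻¹ *ᵥ b) := by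
  rw [← transpose_nonsing_inv, dotProduct_mulVec, vecMul_transpose, dotProduct_comm]

end

end Matrix

theorem stmt_14_general {X : Type*} [Fintype X]
    (P : X → X → ℝ)
    (γ : ℝ)
    (R : X → ℝ)
    (dD : X → ℝ)
    (k : ℕ) (φ : X → Fin k → ℝ)
    (Ξ : Matrix (Fin k) (Fin k) ℝ)
    (hΞ : ∀ i j, Ξ i j = ∑ x, dD x * φ x i * (φ x j - γ * ∑ y, P x y * φ y j))
    (hΞinv : IsUnit Ξ)
    (a : Fin k → ℝ)
    (b : Fin k → ℝ) (hb : ∀ i, b i = ∑ x, dD x * R x * φ x i)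
    (v : Fin k → ℝ) (hv : v = (1 - γ) • (Ξᵀ⁻¹ *ᵥ a)) :
    (∀ i, (1 - γ) * a i + ∑ x, dD x * (∑ j, φ x j * v j) *
        (γ * (∑ y, P x y * φ y i) - φ x i) = 0) ∧
    (∀ v' : Fin k → ℝ,
      (∀ i, (1 - γ) * a i + ∑ x, dD x * (∑ j, φ x j * v' j) *
        (γ * (∑ y, P x y * φ y i) - φ x i) = 0) → v' = v) ∧
    (∑ x, dD x * R x * ∑ j, φ x j * v j =
      (1 - γ) * ∑ i, a i * (Ξ⁻¹ *ᵥ b) i) := by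
  have foc_eq (w : Fin k → ℝ) (i : Fin k) :
      ∑ x, dD x * (φ x ⬝ᵥ w) * (γ * (∑ y, P x y * φ y i) - φ x i) = -(Ξᵀ *ᵥ w) i := by
    rw [transpose_mulVec_apply_of_eq_sum hΞ, ← Finset.sum_neg_distrib]
    exact Finset.sum_congr rfl fun x _ => by ring
  have foc_iff (w : Fin k → ℝ) :
      (∀ i, (1 - γ) * a i + ∑ x, dD x * (φ x ⬝ᵥ w) *
        (γ * (∑ y, P x y * φ y i) - φ x i) = 0) ↔ w = v := by
    rw [hv, ← mulVec_smul, ← mulVec_eq_iff_eq_inv_mulVec ((isUnit_transpose Ξ).2 hΞinv),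
      funext_iff]
    refine forall_congr' fun i => ?_
    rw [foc_eq, add_neg_eq_zero, eq_comm, Pi.smul_apply, smul_eq_mul]
  refine ⟨(foc_iff v).2 rfl, fun v' h => (foc_iff v').1 h, ?_⟩
  calc ∑ x, dD x * R x * (φ x ⬝ᵥ v) = b ⬝ᵥ v := sum_mul_dotProduct_of_eq_sum hb v
    _ = (1 - γ) * (a ⬝ᵥ (Ξ⁻¹ *ᵥ b)) := by
      rw [hv, dotProduct_smul, dotProduct_transpose_inv_mulVec, smul_eq_mul]

/-- LSTDQ via the dual first-order condition. With linear features `φ`,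
`Ξ := ∑ dD(x)·φ(x)(φ(x) - γ(Pφ)(x))ᵀ` invertible, the vector
`v := (1-γ)(Ξᵀ)⁻¹ ∑ μ(x)φ(x)` is the unique solution of the dual first-order condition
`(1-γ)∑ μ(x)φ(x) + ∑ dD(x)⟨φ(x), v⟩(γ(Pφ)(x) - φ(x)) = 0`, and the dual (ratio-based)
estimate `∑ dD(x)R(x)⟨φ(x), v⟩` equals the LSTDQ estimate
`(1-γ)(∑ μ(x)φ(x))ᵀ Ξ⁻¹ (∑ dD(x)R(x)φ(x))`. -/
theorem stmt_14 {X : Type*} [Fintype X] [Nonempty X]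
    (P : X → X → ℝ) (hPnonneg : ∀ x y, 0 ≤ P x y) (hProw : ∀ x, ∑ y, P x y = 1)
    (γ : ℝ) (hγ0 : 0 ≤ γ) (hγ1 : γ < 1)
    (R : X → ℝ) (μ : X → ℝ) (hμnonneg : ∀ x, 0 ≤ μ x) (hμsum : ∑ x, μ x = 1)
    (dD : X → ℝ) (hdD : ∀ x, 0 < dD x)
    (k : ℕ) (φ : X → Fin k → ℝ)
    (Ξ : Matrix (Fin k) (Fin k) ℝ)
    (hΞ : ∀ i j, Ξ i j = ∑ x, dD x * φ x i * (φ x j - γ * ∑ y, P x y * φ y j))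
    (hΞinv : IsUnit Ξ)
    (a : Fin k → ℝ) (ha : ∀ i, a i = ∑ x, μ x * φ x i)
    (b : Fin k → ℝ) (hb : ∀ i, b i = ∑ x, dD x * R x * φ x i)
    (v : Fin k → ℝ) (hv : v = (1 - γ) • (Ξᵀ⁻¹ *ᵥ a)) :
    (∀ i, (1 - γ) * a i + ∑ x, dD x * (∑ j, φ x j * v j) *
        (γ * (∑ y, P x y * φ y i) - φ x i) = 0) ∧
    (∀ v' : Fin k → ℝ,
      (∀ i, (1 - γ) * a i + ∑ x, dD x * (∑ j, φ x j * v' j) *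
        (γ * (∑ y, P x y * φ y i) - φ x i) = 0) → v' = v) ∧
    (∑ x, dD x * R x * ∑ j, φ x j * v j =
      (1 - γ) * ∑ i, a i * (Ξ⁻¹ *ᵥ b) i) :=
  stmt_14_general P γ R dD k φ Ξ hΞ hΞinv a b hb v hv
end

section
/- Let X be a nonempty finite set, P : X × X → ℝ a row-stochastic matrix, γ ∈ [0,1), R : X → ℝ, μ : X → ℝ with μ ≥ 0 and ∑_x μ(x) = 1, dD : X → ℝ with dD(x) > 0 for all x, α_ζ > 0, and α_R ∈ ℝ. Define the unconstrained primal objective J(Q) := (1−γ) ∑_x μ(x) Q(x) + (1/(2 α_ζ)) ∑_x dD(x) (α_R R(x) + γ (P Q)(x) − Q(x))². Then J has a unique global minimizer Q* : X → ℝ, and the dual variable recovered from it equals the true stationary distribution correction ratio: (α_R R(x) + γ (P Q*)(x) − Q*(x)) / α_ζ = dπ(x)/dD(x) for every x ∈ X, where dπ is the unique solution of d = (1−γ) μ + γ Pᵀ d. Consequently ∑_x dD(x) · (α_R R(x) + γ(PQ*)(x) − Q*(x))/α_ζ · R(x) = ∑_x dπ(x) R(x) = ρ(π). -/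
/-!
The optimality condition of `J` says that the Bellman residual `δ(Q) = α_R R + γ P Q - Q`
weighted by `dD` is `α_ζ` times a solution of the flow equation `d = (1-γ) μ + γ Pᵀ d`. So take
`Q*` with `δ(Q*) = α_ζ dπ / dD`; it exists because `I - γ P` is injective (hence invertible), `γ P`
being a sup-norm contraction. Expanding the square around `Q*`, the cross term
`∑ dπ (γ P h - h) = -(1-γ) ⟨μ, h⟩` cancels the linear part, leaving
`J(Q* + h) = J(Q*) + (1/(2α_ζ)) ∑ dD (γ P h - h)²`, which is positive for `h ≠ 0`.
-/

/-- The unconstrained primal objective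
`J(Q) = (1-γ)⟨μ, Q⟩ + (1/(2α_ζ)) ∑ dD·(α_R R + γ P Q - Q)²`. -/
noncomputable def unconstrainedPrimal {X : Type*} [Fintype X] (P : X → X → ℝ) (γ : ℝ)
    (R μ dD : X → ℝ) (αζ αR : ℝ) (Q : X → ℝ) : ℝ :=
  (1 - γ) * (∑ x, μ x * Q x) +
    (1 / (2 * αζ)) * ∑ x, dD x * (αR * R x + γ * (∑ y, P x y * Q y) - Q x) ^ 2

open Finset

section

variable {X : Type*} [Fintype X] {P : X → X → ℝ} {γ : ℝ}

lemma abs_sum_stochastic_mul_le_norm (hPnonneg : ∀ x y, 0 ≤ P x y)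
    (hProw : ∀ x, ∑ y, P x y = 1) (h : X → ℝ) (x : X) :
    |∑ y, P x y * h y| ≤ ‖h‖ :=
  calc |∑ y, P x y * h y| ≤ ∑ y, P x y * |h y| := by
        refine (abs_sum_le_sum_abs _ _).trans_eq (sum_congr rfl fun y _ => ?_)
        rw [abs_mul, abs_of_nonneg (hPnonneg x y)]
    _ ≤ ∑ y, P x y * ‖h‖ :=
        sum_le_sum fun y _ => mul_le_mul_of_nonneg_left (norm_le_pi_norm h y) (hPnonneg x y)
    _ = ‖h‖ := by rw [← sum_mul, hProw x, one_mul]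

/-- `h ↦ γ P h` is a `γ`-contraction in the sup norm. -/
lemma eq_zero_of_eq_discounted (hPnonneg : ∀ x y, 0 ≤ P x y) (hProw : ∀ x, ∑ y, P x y = 1)
    (hγ0 : 0 ≤ γ) (hγ1 : γ < 1) {h : X → ℝ} (hh : ∀ x, h x = γ * ∑ y, P x y * h y) :
    h = 0 := by
  have hcontr : ‖h‖ ≤ γ * ‖h‖ := by
    refine (pi_norm_le_iff_of_nonneg (by positivity)).2 fun x => ?_
    rw [hh x, norm_mul, Real.norm_of_nonneg hγ0, Real.norm_eq_abs]
    exact mul_le_mul_of_nonneg_left (abs_sum_stochastic_mul_le_norm hPnonneg hProw h x) hγ0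
  exact norm_eq_zero.1 (by nlinarith [norm_nonneg h])

lemma exists_sub_discounted_eq (hPnonneg : ∀ x y, 0 ≤ P x y) (hProw : ∀ x, ∑ y, P x y = 1)
    (hγ0 : 0 ≤ γ) (hγ1 : γ < 1) (c : X → ℝ) :
    ∃ Q : X → ℝ, ∀ x, Q x - γ * ∑ y, P x y * Q y = c x := by
  let L : (X → ℝ) →ₗ[ℝ] (X → ℝ) := LinearMap.id - γ • Matrix.mulVecLin P
  have hL : ∀ Q x, L Q x = Q x - γ * ∑ y, P x y * Q y := fun Q x => rfl
  have hinj : Function.Injective L := by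
    refine (injective_iff_map_eq_zero L).2 fun h hLh =>
      eq_zero_of_eq_discounted hPnonneg hProw hγ0 hγ1 fun x => ?_
    have hx : h x - γ * ∑ y, P x y * h y = 0 := (hL h x).symm.trans (congrFun hLh x)
    linarith
  obtain ⟨Q, hQ⟩ := LinearMap.injective_iff_surjective.1 hinj c
  exact ⟨Q, fun x => (hL Q x).symm.trans (congrFun hQ x)⟩

variable {μ dπ : X → ℝ}

lemma sum_mul_discounted_sub_eq (hdπ : ∀ x, dπ x = (1 - γ) * μ x + γ * ∑ y, P y x * dπ y)
    (h : X → ℝ) :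
    ∑ x, dπ x * (γ * ∑ y, P x y * h y - h x) = -((1 - γ) * ∑ x, μ x * h x) := by
  have hflow : ∑ x, dπ x * (γ * ∑ y, P x y * h y) = ∑ y, (γ * ∑ x, P x y * dπ x) * h y := by
    simp only [mul_sum, sum_mul]
    rw [sum_comm]
    exact sum_congr rfl fun _ _ => sum_congr rfl fun _ _ => by ring
  have hbalance : ∀ y, γ * ∑ x, P x y * dπ x = dπ y - (1 - γ) * μ y := fun y => by
    linarith [hdπ y]
  rw [sum_congr rfl fun x _ => mul_sub (dπ x) _ _, sum_sub_distrib, hflow]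
  simp only [hbalance, sub_mul, sum_sub_distrib, mul_sum, mul_assoc]
  ring

variable {R dD : X → ℝ} {αζ αR : ℝ}

/-- The linear part of `J` around `Qs` cancels against the cross term of the square, by the flow
identity for `dπ`. -/
lemma unconstrainedPrimal_eq_add_sum_sq (hdπ : ∀ x, dπ x = (1 - γ) * μ x + γ * ∑ y, P y x * dπ y)
    (hdD : ∀ x, dD x ≠ 0) (hαζ : αζ ≠ 0) {Qs : X → ℝ}
    (hres : ∀ x, αR * R x + γ * ∑ y, P x y * Qs y - Qs x = αζ * dπ x / dD x) (Q : X → ℝ) :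
    unconstrainedPrimal P γ R μ dD αζ αR Q = unconstrainedPrimal P γ R μ dD αζ αR Qs +
      1 / (2 * αζ) * ∑ x, dD x * (γ * ∑ y, P x y * (Q y - Qs y) - (Q x - Qs x)) ^ 2 := by
  have hsplit : ∀ x, αR * R x + γ * ∑ y, P x y * Q y - Q x = αζ * dπ x / dD x +
      (γ * ∑ y, P x y * (Q y - Qs y) - (Q x - Qs x)) := fun x => by
    rw [← hres x]
    simp only [mul_sub, sum_sub_distrib]
    ring
  have hsq : ∑ x, dD x * (αR * R x + γ * ∑ y, P x y * Q y - Q x) ^ 2 =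
      ∑ x, dD x * (αR * R x + γ * ∑ y, P x y * Qs y - Qs x) ^ 2 +
        2 * αζ * ∑ x, dπ x * (γ * ∑ y, P x y * (Q y - Qs y) - (Q x - Qs x)) +
        ∑ x, dD x * (γ * ∑ y, P x y * (Q y - Qs y) - (Q x - Qs x)) ^ 2 := by
    rw [mul_sum, ← sum_add_distrib, ← sum_add_distrib]
    refine sum_congr rfl fun x _ => ?_
    rw [hsplit x, hres x]
    field_simp [hdD x]
    ring
  have hμ : ∑ x, μ x * Q x = ∑ x, μ x * Qs x + ∑ x, μ x * (Q x - Qs x) := by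
    rw [← sum_add_distrib]
    exact sum_congr rfl fun x _ => by ring
  unfold unconstrainedPrimal
  rw [hsq, hμ, sum_mul_discounted_sub_eq hdπ]
  field_simp
  ring

lemma sum_sq_discounted_sub_pos (hPnonneg : ∀ x y, 0 ≤ P x y) (hProw : ∀ x, ∑ y, P x y = 1)
    (hγ0 : 0 ≤ γ) (hγ1 : γ < 1) (hdD : ∀ x, 0 < dD x) {h : X → ℝ} (hh : h ≠ 0) :
    0 < ∑ x, dD x * (γ * ∑ y, P x y * h y - h x) ^ 2 := by
  have hnonneg : ∀ x ∈ univ, 0 ≤ dD x * (γ * ∑ y, P x y * h y - h x) ^ 2 :=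
    fun x _ => mul_nonneg (hdD x).le (sq_nonneg _)
  refine (sum_nonneg hnonneg).lt_of_ne fun hzero => hh ?_
  refine eq_zero_of_eq_discounted hPnonneg hProw hγ0 hγ1 fun x => ?_
  have hx := (sum_eq_zero_iff_of_nonneg hnonneg).1 hzero.symm x (mem_univ x)
  rw [mul_eq_zero, or_iff_right (hdD x).ne', sq_eq_zero_iff, sub_eq_zero] at hx
  exact hx.symm

end

theorem stmt_16_general {X : Type*} [Fintype X]
    (P : X → X → ℝ) (hPnonneg : ∀ x y, 0 ≤ P x y) (hProw : ∀ x, ∑ y, P x y = 1)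
    (γ : ℝ) (hγ0 : 0 ≤ γ) (hγ1 : γ < 1)
    (R : X → ℝ) (μ : X → ℝ)
    (dD : X → ℝ) (hdD : ∀ x, 0 < dD x)
    (αζ : ℝ) (hαζ : 0 < αζ) (αR : ℝ)
    (dπ : X → ℝ) (hdπ : ∀ x, dπ x = (1 - γ) * μ x + γ * ∑ y, P y x * dπ y) :
    ∃ Qs : X → ℝ,
      (∀ Q : X → ℝ, unconstrainedPrimal P γ R μ dD αζ αR Qs ≤
          unconstrainedPrimal P γ R μ dD αζ αR Q) ∧
      (∀ Qs' : X → ℝ, (∀ Q : X → ℝ, unconstrainedPrimal P γ R μ dD αζ αR Qs' ≤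
          unconstrainedPrimal P γ R μ dD αζ αR Q) → Qs' = Qs) ∧
      (∀ x, (αR * R x + γ * (∑ y, P x y * Qs y) - Qs x) / αζ = dπ x / dD x) ∧
      (∑ x, dD x * ((αR * R x + γ * (∑ y, P x y * Qs y) - Qs x) / αζ) * R x =
        ∑ x, dπ x * R x) := by
  obtain ⟨Qs, hQs⟩ := exists_sub_discounted_eq hPnonneg hProw hγ0 hγ1
    fun x => αR * R x - αζ * dπ x / dD x
  have hres : ∀ x, αR * R x + γ * ∑ y, P x y * Qs y - Qs x = αζ * dπ x / dD x :=
    fun x => by linarith [hQs x]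
  have hdec := unconstrainedPrimal_eq_add_sum_sq hdπ (fun x => (hdD x).ne') hαζ.ne' hres
  have hratio : ∀ x, (αR * R x + γ * ∑ y, P x y * Qs y - Qs x) / αζ = dπ x / dD x :=
    fun x => by rw [hres x, mul_div_assoc, mul_div_cancel_left₀ _ hαζ.ne']
  refine ⟨Qs, fun Q => ?_, fun Qs' hmin => ?_, hratio, ?_⟩
  · rw [hdec Q, le_add_iff_nonneg_right]
    exact mul_nonneg (by positivity)
      (sum_nonneg fun x _ => mul_nonneg (hdD x).le (sq_nonneg _))
  · by_contra hne
    have hpos := sum_sq_discounted_sub_pos hPnonneg hProw hγ0 hγ1 hdD (sub_ne_zero.2 hne)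
    have hgap := hmin Qs
    rw [hdec Qs', add_le_iff_nonpos_right] at hgap
    exact hgap.not_gt (mul_pos (by positivity) hpos)
  · refine sum_congr rfl fun x _ => ?_
    rw [hratio x, mul_div_cancel₀ _ (hdD x).ne']

/-- The unconstrained primal objective `J` has a unique global minimizer `Q*`,
the dual variable recovered from it is the true stationary distribution correction ratio:
`(α_R R + γ P Q* - Q*)/α_ζ = dπ/dD` pointwise, and consequently the resulting dual estimate
equals the policy value `∑ dπ·R`. -/
theorem stmt_16 {X : Type*} [Fintype X] [Nonempty X]
    (P : X → X → ℝ) (hPnonneg : ∀ x y, 0 ≤ P x y) (hProw : ∀ x, ∑ y, P x y = 1)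
    (γ : ℝ) (hγ0 : 0 ≤ γ) (hγ1 : γ < 1)
    (R : X → ℝ) (μ : X → ℝ) (hμnonneg : ∀ x, 0 ≤ μ x) (hμsum : ∑ x, μ x = 1)
    (dD : X → ℝ) (hdD : ∀ x, 0 < dD x)
    (αζ : ℝ) (hαζ : 0 < αζ) (αR : ℝ)
    (dπ : X → ℝ) (hdπ : ∀ x, dπ x = (1 - γ) * μ x + γ * ∑ y, P y x * dπ y) :
    ∃ Qs : X → ℝ,
      (∀ Q : X → ℝ, unconstrainedPrimal P γ R μ dD αζ αR Qs ≤
          unconstrainedPrimal P γ R μ dD αζ αR Q) ∧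
      (∀ Qs' : X → ℝ, (∀ Q : X → ℝ, unconstrainedPrimal P γ R μ dD αζ αR Qs' ≤
          unconstrainedPrimal P γ R μ dD αζ αR Q) → Qs' = Qs) ∧
      (∀ x, (αR * R x + γ * (∑ y, P x y * Qs y) - Qs x) / αζ = dπ x / dD x) ∧
      (∑ x, dD x * ((αR * R x + γ * (∑ y, P x y * Qs y) - Qs x) / αζ) * R x =
        ∑ x, dπ x * R x) :=
  stmt_16_general P hPnonneg hProw γ hγ0 hγ1 R μ dD hdD αζ hαζ αR dπ hdπ
end
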